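/- arXiv:2105.14870 — 3 statements merged into one kernel-verified Lean document; each statement's English description precedes it below -/
import Mathlib

section
/- Let (X, d_X) and (Y, d_Y) be metric spaces, a, c ∈ X, and φ : X → X a distance-preserving map with φ(c) = c and φ ∘ φ = id_X. Define L = {x ∈ X : d_X(a, x) = d_X(φ(a), x) = d_X(a, c)}. Suppose there exists K > 1 such that d_X(φ(x), x) ≥ K · d_X(x, c) for every x ∈ L. If Δ : X → Y is a bijective distance-preserving map and ψ : Y → Y is a bijective distance-preserving map with ψ(Δ(a)) = Δ(φ(a)) and ψ(Δ(φ(a))) = Δ(a), then ψ(Δ(c)) = Δ(c). -/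
/-- Theorem 2.4 of Hatori–Hirasawa–Miura–Molnár: a fixed-point transfer result
for surjective distance-preserving maps between metric spaces. -/
theorem stmt_0 {X Y : Type*} [MetricSpace X] [MetricSpace Y]
    (a c : X) (φ : X → X)
    (hφiso : ∀ x y : X, dist (φ x) (φ y) = dist x y)
    (hφc : φ c = c) (hφinv : ∀ x : X, φ (φ x) = x)
    (K : ℝ) (hK : 1 < K)
    (hL : ∀ x : X, dist a x = dist (φ a) x → dist a x = dist a c →
      dist (φ x) x ≥ K * dist x c)
    (Δ : X → Y) (hΔbij : Function.Bijective Δ)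
    (hΔiso : ∀ x y : X, dist (Δ x) (Δ y) = dist x y)
    (ψ : Y → Y) (hψbij : Function.Bijective ψ)
    (hψiso : ∀ x y : Y, dist (ψ x) (ψ y) = dist x y)
    (h1 : ψ (Δ a) = Δ (φ a)) (h2 : ψ (Δ (φ a)) = Δ a) :
    ψ (Δ c) = Δ c := by
  classical
  have : Nonempty X := ⟨a⟩
  have : Nonempty Y := ⟨Δ a⟩
  set Δ' := Function.invFun Δ with hΔ'def
  have hΔl : ∀ x, Δ' (Δ x) = x := fun x => Function.leftInverse_invFun hΔbij.1 x
  have hΔr : ∀ y, Δ (Δ' y) = y := fun y => Function.rightInverse_invFun hΔbij.2 y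
  set ψ' := Function.invFun ψ with hψ'def
  have hψl : ∀ x, ψ' (ψ x) = x := fun x => Function.leftInverse_invFun hψbij.1 x
  have hψr : ∀ y, ψ (ψ' y) = y := fun y => Function.rightInverse_invFun hψbij.2 y
  have hΔ'iso : ∀ u v, dist (Δ' u) (Δ' v) = dist u v := by
    intro u v
    rw [← hΔiso (Δ' u) (Δ' v), hΔr, hΔr]
  -- the conjugated map
  set T : X → X := fun x => Δ' (ψ (Δ x)) with hTdef
  set T' : X → X := fun x => Δ' (ψ' (Δ x)) with hT'def
  -- the predicate: isometry fixing or swapping {a, φ a}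
  set P : (X → X) → Prop := fun g => (∀ x y, dist (g x) (g y) = dist x y) ∧
    ((g a = a ∧ g (φ a) = φ a) ∨ (g a = φ a ∧ g (φ a) = a)) with hPdef
  set A : Set ℝ := { r | ∃ g g' : X → X, P g ∧ (∀ x, g' (g x) = x) ∧
    (∀ x, g (g' x) = x) ∧ r = dist (g c) c } with hAdef
  have hφac : dist (φ a) c = dist a c := by
    conv_lhs => rw [← hφc]
    exact hφiso a c
  -- for P g, g c lies in L
  have hgcL : ∀ g : X → X, P g → dist a (g c) = dist (φ a) (g c) ∧
      dist a (g c) = dist a c := by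
    intro g ⟨hgiso, hcase⟩
    rcases hcase with ⟨ha, hfa⟩ | ⟨ha, hfa⟩
    · have e1 : dist a (g c) = dist a c := by
        have := hgiso a c; rwa [ha] at this
      have e2 : dist (φ a) (g c) = dist a c := by
        have := hgiso (φ a) c; rw [hfa] at this
        exact this.trans hφac
      exact ⟨e1.trans e2.symm, e1⟩
    · have e1 : dist a (g c) = dist a c := by
        have := hgiso (φ a) c; rw [hfa] at this
        exact this.trans hφac
      have e2 : dist (φ a) (g c) = dist a c := by
        have := hgiso a c; rwa [ha] at this
      exact ⟨e1.trans e2.symm, e1⟩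
  -- A is bounded above
  have hbdd : BddAbove A := by
    refine ⟨2 * dist a c, ?_⟩
    rintro r ⟨g, g', hg, hl, hr, rfl⟩
    obtain ⟨_, h2'⟩ := hgcL g hg
    calc dist (g c) c ≤ dist (g c) a + dist a c := dist_triangle _ _ _
      _ = dist a (g c) + dist a c := by rw [dist_comm]
      _ = dist a c + dist a c := by rw [h2']
      _ = 2 * dist a c := by ring
  -- T satisfies P with inverse T'
  have hTiso : ∀ x y, dist (T x) (T y) = dist x y := by
    intro x y
    simp only [hTdef]
    rw [hΔ'iso, hψiso, hΔiso]
  have hTP : P T := by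
    refine ⟨hTiso, Or.inr ⟨?_, ?_⟩⟩
    · simp only [hTdef]
      rw [h1, hΔl]
    · simp only [hTdef]
      rw [h2, hΔl]
  have hTl : ∀ x, T' (T x) = x := by
    intro x
    simp only [hTdef, hT'def]
    rw [hΔr, hψl, hΔl]
  have hTr : ∀ x, T (T' x) = x := by
    intro x
    simp only [hTdef, hT'def]
    rw [hΔr, hψr, hΔl]
  have hTA : dist (T c) c ∈ A := ⟨T, T', hTP, hTl, hTr, rfl⟩
  have hAne : A.Nonempty := ⟨_, hTA⟩
  -- key closure step: for r ∈ A, K * r ≤ sSup A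
  have hkey : ∀ r ∈ A, K * r ≤ sSup A := by
    rintro r ⟨g, g', hg, hl, hr, rfl⟩
    obtain ⟨hgiso, hcase⟩ := hg
    have hg'iso : ∀ u v, dist (g' u) (g' v) = dist u v := by
      intro u v
      rw [← hgiso (g' u) (g' v), hr, hr]
    set h : X → X := fun x => g' (φ (g x)) with hhdef
    have hhiso : ∀ x y, dist (h x) (h y) = dist x y := by
      intro x y
      simp only [hhdef]
      rw [hg'iso, hφiso, hgiso]
    have hhinv : ∀ x, h (h x) = x := by
      intro x
      simp only [hhdef]
      rw [hr, hφinv, hl]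
    have hhP : P h := by
      refine ⟨hhiso, Or.inr ?_⟩
      rcases hcase with ⟨ha, hfa⟩ | ⟨ha, hfa⟩
      · have k1 : g' (φ a) = φ a := by
          have := congrArg g' hfa; rw [hl] at this; exact this.symm
        have k2 : g' a = a := by
          have := congrArg g' ha; rw [hl] at this; exact this.symm
        constructor
        · show g' (φ (g a)) = φ a
          rw [ha, k1]
        · show g' (φ (g (φ a))) = a
          rw [hfa, hφinv, k2]
      · have k1 : g' (φ a) = a := by
          have := congrArg g' ha; rw [hl] at this; exact this.symm
        have k2 : g' a = φ a := by
          have := congrArg g' hfa; rw [hl] at this; exact this.symm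
        constructor
        · show g' (φ (g a)) = φ a
          rw [ha, hφinv, k2]
        · show g' (φ (g (φ a))) = a
          rw [hfa, k1]
    have hhA : dist (h c) c ∈ A := ⟨h, h, hhP, hhinv, hhinv, rfl⟩
    have hdist : dist (h c) c = dist (φ (g c)) (g c) := by
      have : dist (g' (φ (g c))) (g' (g c)) = dist (φ (g c)) (g c) := hg'iso _ _
      rw [hl] at this
      exact this
    obtain ⟨hL1, hL2⟩ := hgcL g ⟨hgiso, hcase⟩
    have := hL (g c) hL1 hL2
    calc K * dist (g c) c ≤ dist (φ (g c)) (g c) := by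
            rw [dist_comm (g c) c] at this ⊢; exact this
      _ = dist (h c) c := hdist.symm
      _ ≤ sSup A := le_csSup hbdd hhA
  -- conclude sSup A ≤ 0
  have hK0 : (0:ℝ) < K := lt_trans one_pos hK
  have hsup_le : sSup A ≤ sSup A / K := by
    apply csSup_le hAne
    intro r hrA
    rw [le_div_iff₀ hK0, mul_comm]
    exact hkey r hrA
  have hM0 : sSup A ≤ 0 := by
    by_contra hpos
    push_neg at hpos
    have h1' : sSup A * K ≤ sSup A := (le_div_iff₀ hK0).mp hsup_le
    nlinarith [mul_lt_mul_of_pos_left hK hpos]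
  have hr0 : dist (T c) c ≤ 0 := le_trans (le_csSup hbdd hTA) hM0
  have hTc : T c = c := by
    have := dist_nonneg (x := T c) (y := c)
    have : dist (T c) c = 0 := le_antisymm hr0 this
    exact dist_eq_zero.mp this
  have : Δ' (ψ (Δ c)) = c := hTc
  calc ψ (Δ c) = Δ (Δ' (ψ (Δ c))) := (hΔr _).symm
    _ = Δ c := by rw [this]
end

section
/- Let A be a unital C*-algebra and let u, v be unitaries lying in two different connected components of the unitary group 𝒰(A). Then ‖u - v‖ = 2. -/
/-! Unitaries are norm one, so `‖u - v‖ ≤ 2`. If `‖u - v‖ < 2`, the spectrum of `v u*` avoids `-1`,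
so `v u* = exp (i a)` with `a = arg (v u*)` self-adjoint (continuous functional calculus), and
`t ↦ exp (i t a) u` is a path from `u` to `v` inside the unitary group (`Unitary.path`). -/

theorem JoinedIn.mem_connectedComponentIn {X : Type*} [TopologicalSpace X] {F : Set X}
    {x y : X} (h : JoinedIn F x y) : y ∈ connectedComponentIn F x :=
  (isConnected_range h.somePath.continuous).isPreconnected.subset_connectedComponentIn
    ⟨0, by simp⟩ (Set.range_subset_iff.2 h.somePath_mem) ⟨1, by simp⟩

theorem Unitary.norm_sub_le_two {A : Type*} [NormedRing A] [StarRing A] [CStarRing A]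
    {u v : A} (hu : u ∈ unitary A) (hv : v ∈ unitary A) : ‖u - v‖ ≤ 2 := by
  rcases subsingleton_or_nontrivial A with hA | hA
  · simp [Subsingleton.elim u v]
  calc ‖u - v‖ ≤ ‖u‖ + ‖v‖ := norm_sub_le u v
    _ = 2 := by rw [CStarRing.norm_of_mem_unitary hu, CStarRing.norm_of_mem_unitary hv]; norm_num

theorem Unitary.mem_connectedComponentIn_of_norm_sub_lt_two {A : Type*} [CStarAlgebra A]
    {u v : A} (hu : u ∈ unitary A) (hv : v ∈ unitary A) (huv : ‖v - u‖ < 2) :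
    v ∈ connectedComponentIn (unitary A : Set A) u :=
  ((joinedIn_iff_joined hu hv).2 (Unitary.joined ⟨u, hu⟩ ⟨v, hv⟩ huv)).mem_connectedComponentIn

/-- Two unitaries in different connected components of the unitary group of a
unital C*-algebra are at distance exactly `2`. -/
theorem stmt_12 {A : Type*} [NormedRing A] [StarRing A] [CStarRing A]
    [NormedAlgebra ℂ A] [StarModule ℂ A] [CompleteSpace A]
    (u v : A) (hu : u ∈ unitary A) (hv : v ∈ unitary A)
    (hdiff : v ∉ connectedComponentIn (unitary A : Set A) u) :
    ‖u - v‖ = 2 := by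
  let : CStarAlgebra A :=
    { ‹NormedRing A›, ‹StarRing A›, ‹CompleteSpace A›, ‹CStarRing A›,
      ‹NormedAlgebra ℂ A›, ‹StarModule ℂ A› with }
  refine (Unitary.norm_sub_le_two hu hv).antisymm (not_lt.1 fun huv => hdiff ?_)
  exact Unitary.mem_connectedComponentIn_of_norm_sub_lt_two hu hv (norm_sub_rev v u ▸ huv)
end

section
/- Let A and B be unital C*-algebras and T, T₀ : A → B surjective real-linear isometries. Assume T₀ is a real-linear Jordan *-isomorphism (T₀(x ∘ y) = T₀(x) ∘ T₀(y) and T₀(x*) = T₀(x)* where x ∘ y = (xy + yx)/2), T is real-linear, T(1) = T₀(1) = 1, both T and T₀ preserve the Jordan triple product {x,y,z} = (x y* z + z y* x)/2, and T₀(u) x T₀(u) = T(u) x T(u) for every x ∈ B and every unitary u in the principal component 𝒰⁰(A). Then T = T₀. -/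
/-!
Since `T₀` is a unital Jordan *-map preserving triple products, `v = T₀ u` is unitary for
every unitary `u`, while `w = T u` satisfies `w w⋆ w = w`. Taking `x = v⋆` in `U_v = U_w`
gives `w v⋆ w = v`, which makes `w` invertible, hence unitary, and `s = v⋆ w` a symmetry
(`s⋆ = s`, `s² = 1`). For a symmetry, `‖s - 1‖ ∈ {0, 2}`; as `u ↦ s` is continuous and
equals `1` at `u = 1`, connectedness forces `s = 1`, i.e. `T = T₀`, on `𝒰⁰(A)`.

For skew-adjoint `c`, the curve `t ↦ exp (t c)` lies in `𝒰⁰(A)`, so `D = T - T₀` vanishes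
on it; differentiating twice at `t = 0` gives `D c = D (c²) = 0`. Polarization turns the
vanishing on squares of skew-adjoint elements into the vanishing on `i c`, and
`A = skewAdjoint A + i skewAdjoint A`.
-/

open NormedSpace

theorem half_smul_add_self {M : Type*} [AddCommGroup M] [Module ℝ M] (x : M) :
    (1 / 2 : ℝ) • (x + x) = x := by
  rw [← two_smul ℝ x, smul_smul]
  norm_num

section Unitary

variable {R : Type*} [Monoid R] [StarMul R]

theorem mem_unitary_of_isUnit_of_mul_star_mul_self {w : R} (hw : IsUnit w)
    (h : w * star w * w = w) : w ∈ unitary R :=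
  Unitary.mem_iff.2
    ⟨hw.mul_left_cancel (by rw [← mul_assoc, h, mul_one]),
      hw.mul_right_cancel (by rw [h, one_mul])⟩

theorem IsSelfAdjoint.of_mem_unitary_of_mul_self_eq_one {s : R} (hs : s ∈ unitary R)
    (h : s * s = 1) : IsSelfAdjoint s :=
  calc star s = star s * (s * s) := by rw [h, mul_one]
    _ = s := by rw [← mul_assoc, Unitary.star_mul_self_of_mem hs, one_mul]

theorem isSelfAdjoint_star_mul_and_mul_self_eq_one {v w : R} (hv : v ∈ unitary R)
    (hw : w * star w * w = w) (hvw : w * star v * w = v) :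
    IsSelfAdjoint (star v * w) ∧ star v * w * (star v * w) = 1 := by
  have hright : w * (star v * w * star v) = 1 :=
    calc w * (star v * w * star v) = w * star v * w * star v := by simp only [mul_assoc]
      _ = 1 := by rw [hvw, Unitary.mul_star_self_of_mem hv]
  have hleft : star v * w * star v * w = 1 :=
    calc star v * w * star v * w = star v * (w * star v * w) := by simp only [mul_assoc]
      _ = 1 := by rw [hvw, Unitary.star_mul_self_of_mem hv]
  have hw_unitary : w ∈ unitary R :=
    mem_unitary_of_isUnit_of_mul_star_mul_self ⟨⟨w, _, hright, hleft⟩, rfl⟩ hw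
  have hsq : star v * w * (star v * w) = 1 := by rw [← hleft]; simp only [mul_assoc]
  exact ⟨.of_mem_unitary_of_mul_self_eq_one
    (mul_mem (Unitary.star_mem hv) hw_unitary) hsq, hsq⟩

end Unitary

theorem mem_unitary_of_mul_star_mul_self_of_jordan {R : Type*} [Ring R] [StarRing R]
    [Module ℝ R] {v : R} (h : v * star v * v = v)
    (hjordan : (1 / 2 : ℝ) • (v * star v + star v * v) = 1) : v ∈ unitary R := by
  have hp : v * star v * (v * star v) = v * star v := by rw [← mul_assoc, h]
  have hq : star v * v * (star v * v) = star v * v := by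
    rw [mul_assoc, ← mul_assoc v, h]
  have hpq : v * star v = 1 + 1 - star v * v := by
    rw [eq_sub_iff_add_eq, ← two_smul ℝ, ← hjordan, smul_smul]
    norm_num
  -- `v v⋆` and `v⋆ v` are idempotents adding up to `2`
  have hq1 : star v * v = 1 := by
    have h2 : (1 - star v * v) + (1 - star v * v) =
        (v * star v * (v * star v) - v * star v) -
          (star v * v * (star v * v) - star v * v) := by
      rw [hpq]; noncomm_ring
    rw [hp, hq, sub_self, sub_self, sub_zero] at h2
    rw [eq_comm, ← sub_eq_zero, ← half_smul_add_self (1 - star v * v), h2, smul_zero]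
  exact Unitary.mem_iff.2 ⟨hq1, by rw [hpq, hq1, add_sub_cancel_right]⟩

section TripleProduct

variable {A B : Type*} [Ring A] [StarRing A] [Module ℝ A] [Ring B] [StarRing B] [Module ℝ B]
  {f : A → B}

theorem map_mul_star_mul_self_of_map_triple
    (htriple : ∀ x y z : A, f ((1 / 2 : ℝ) • (x * star y * z + z * star y * x)) =
      (1 / 2 : ℝ) • (f x * star (f y) * f z + f z * star (f y) * f x)) (x : A) :
    f (x * star x * x) = f x * star (f x) * f x := by
  simpa only [half_smul_add_self] using htriple x x x

theorem map_mem_unitary_of_jordan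
    (hjordan : ∀ x y : A,
      f ((1 / 2 : ℝ) • (x * y + y * x)) = (1 / 2 : ℝ) • (f x * f y + f y * f x))
    (hstar : ∀ x : A, f (star x) = star (f x)) (hone : f 1 = 1)
    (htriple : ∀ x y z : A, f ((1 / 2 : ℝ) • (x * star y * z + z * star y * x)) =
      (1 / 2 : ℝ) • (f x * star (f y) * f z + f z * star (f y) * f x))
    {u : A} (hu : u ∈ unitary A) : f u ∈ unitary B := by
  refine mem_unitary_of_mul_star_mul_self_of_jordan ?_ ?_
  · rw [← map_mul_star_mul_self_of_map_triple htriple, Unitary.mul_star_self_of_mem hu, one_mul]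
  · rw [← hstar, ← hjordan, Unitary.mul_star_self_of_mem hu, Unitary.star_mul_self_of_mem hu,
      half_smul_add_self, hone]

end TripleProduct

section CStarRing

variable {B : Type*} [NormedRing B] [StarRing B] [CStarRing B] [NormedSpace ℝ B]

theorem IsSelfAdjoint.norm_sub_one_eq_zero_or_two {s : B} (hs : IsSelfAdjoint s)
    (h : s * s = 1) : ‖s - 1‖ = 0 ∨ ‖s - 1‖ = 2 := by
  have hsq : (s - 1) * (s - 1) = (-2 : ℝ) • (s - 1) := by
    rw [neg_smul, two_smul, show (s - 1) * (s - 1) = s * s - s - s + 1 by noncomm_ring, h]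
    abel
  have hnorm : ‖s - 1‖ * ‖s - 1‖ = 2 * ‖s - 1‖ := by
    rw [← CStarRing.norm_star_mul_self, star_sub, star_one, hs.star_eq, hsq, norm_smul]
    norm_num
  have : ‖s - 1‖ * (‖s - 1‖ - 2) = 0 := by rw [mul_sub, hnorm]; ring
  rcases mul_eq_zero.1 this with h0 | h2
  · exact .inl h0
  · exact .inr (sub_eq_zero.1 h2)

theorem IsPreconnected.eq_one_of_isSelfAdjoint_of_mul_self_eq_one {X : Type*}
    [TopologicalSpace X] {S : Set X} (hS : IsPreconnected S) {g : X → B} (hg : ContinuousOn g S)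
    (hsa : ∀ x ∈ S, IsSelfAdjoint (g x)) (hsq : ∀ x ∈ S, g x * g x = 1) {x₀ : X}
    (hx₀ : x₀ ∈ S) (hgx₀ : g x₀ = 1) {x : X} (hx : x ∈ S) : g x = 1 := by
  have hvalues : ∀ y ∈ S, ‖g y - 1‖ = 0 ∨ ‖g y - 1‖ = 2 := fun y hy =>
    (hsa y hy).norm_sub_one_eq_zero_or_two (hsq y hy)
  have himage : IsPreconnected ((fun y => ‖g y - 1‖) '' S) :=
    hS.image _ (hg.sub continuousOn_const).norm
  rcases hvalues x hx with h0 | h2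
  · exact sub_eq_zero.1 (norm_eq_zero.1 h0)
  · -- the norms `‖g y - 1‖` would then take the intermediate value `1`
    obtain ⟨y, hy, hy1⟩ := himage.Icc_subset ⟨x₀, hx₀, by simp [hgx₀]⟩ ⟨x, hx, h2⟩
      (⟨zero_le_one, one_le_two⟩ : (1 : ℝ) ∈ Set.Icc 0 2)
    rcases hvalues y hy with h | h <;> norm_num [hy1] at h

theorem IsPreconnected.eqOn_of_mul_star_mul_eq {X : Type*}
    [TopologicalSpace X] {S : Set X} (hS : IsPreconnected S) {v w : X → B}
    (hv : ContinuousOn v S) (hw : ContinuousOn w S) (hv_unitary : ∀ x ∈ S, v x ∈ unitary B)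
    (hw_partial : ∀ x ∈ S, w x * star (w x) * w x = w x)
    (hvw : ∀ x ∈ S, w x * star (v x) * w x = v x) {x₀ : X} (hx₀ : x₀ ∈ S)
    (h₀ : w x₀ = v x₀) :
    Set.EqOn w v S := by
  intro x hx
  have hsymm : ∀ y ∈ S, IsSelfAdjoint (star (v y) * w y) ∧
      star (v y) * w y * (star (v y) * w y) = 1 := fun y hy =>
    isSelfAdjoint_star_mul_and_mul_self_eq_one (hv_unitary y hy) (hw_partial y hy) (hvw y hy)
  have hs := hS.eq_one_of_isSelfAdjoint_of_mul_self_eq_one (g := fun y => star (v y) * w y)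
    (hv.star.mul hw) (fun y hy => (hsymm y hy).1) (fun y hy => (hsymm y hy).2) hx₀
    (by rw [h₀, Unitary.star_mul_self_of_mem (hv_unitary x₀ hx₀)]) hx
  calc w x = v x * (star (v x) * w x) := by
        rw [← mul_assoc, Unitary.mul_star_self_of_mem (hv_unitary x hx), one_mul]
    _ = v x := by rw [hs, mul_one]

end CStarRing

section Exponential

variable {A : Type*} [NormedRing A] [NormedAlgebra ℝ A] [CompleteSpace A]

theorem exp_smul_mem_connectedComponentIn_unitary [StarRing A] [ContinuousStar A]
    [StarModule ℝ A] {c : A} (hc : c ∈ skewAdjoint A) (t : ℝ) :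
    exp (t • c) ∈ connectedComponentIn (unitary A : Set A) 1 := by
  let : NormedAlgebra ℚ A := NormedAlgebra.restrictScalars ℚ ℝ A
  have hcurve : IsPreconnected (Set.range fun r : ℝ => exp (r • c)) :=
    isPreconnected_range (by fun_prop)
  refine hcurve.subset_connectedComponentIn ⟨0, by simp⟩ ?_ ⟨t, rfl⟩
  rintro _ ⟨r, rfl⟩
  exact exp_mem_unitary_of_mem_skewAdjoint (skewAdjoint.smul_mem r hc)

variable {B : Type*} [NormedAddCommGroup B] [NormedSpace ℝ B]

theorem ContinuousLinearMap.map_mul_exp_smul_eq_zero (D : A →L[ℝ] B) {c : A}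
    (h : ∀ t : ℝ, D (exp (t • c)) = 0) (t : ℝ) : D (c * exp (t • c)) = 0 := by
  have hderiv := D.hasFDerivAt.comp_hasDerivAt t (hasDerivAt_exp_smul_const' (𝕂 := ℝ) c t)
  rw [show (D ∘ fun r : ℝ => exp (r • c)) = fun _ => 0 from funext h] at hderiv
  exact hderiv.unique (hasDerivAt_const t 0)

theorem ContinuousLinearMap.map_eq_zero_and_map_mul_self_eq_zero_of_map_exp_smul
    (D : A →L[ℝ] B) {c : A}
    (h : ∀ t : ℝ, D (exp (t • c)) = 0) : D c = 0 ∧ D (c * c) = 0 := by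
  have h1 := D.map_mul_exp_smul_eq_zero h
  have h2 := (D.comp (ContinuousLinearMap.mul ℝ A c)).map_mul_exp_smul_eq_zero h1 0
  simp only [zero_smul, exp_zero, mul_one, ContinuousLinearMap.comp_apply,
    ContinuousLinearMap.mul_apply'] at h1 h2
  exact ⟨by simpa using h1 0, h2⟩

end Exponential

open Complex ComplexStarModule in
theorem LinearMap.eq_zero_of_map_skewAdjoint {A B : Type*} [Ring A] [StarRing A] [Algebra ℂ A]
    [StarModule ℂ A] [AddCommGroup B] [Module ℝ B] (D : A →ₗ[ℝ] B)
    (hD : ∀ c ∈ skewAdjoint A, D c = 0) (hDsq : ∀ c ∈ skewAdjoint A, D (c * c) = 0) :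
    D = 0 := by
  have hI : ∀ c ∈ skewAdjoint A, D (I • c) = 0 := by
    intro c hc
    set i : A := I • 1 with hi_def
    have hi : i ∈ skewAdjoint A := (IsSelfAdjoint.one A).smul_mem_skewAdjoint conj_I
    have hpolar : I • c = (1 / 2 : ℝ) • ((c + i) * (c + i) - c * c - i * i) := by
      rw [show (c + i) * (c + i) - c * c - i * i = c * i + i * c by noncomm_ring, hi_def,
        mul_smul_comm, smul_mul_assoc, mul_one, one_mul, half_smul_add_self]
    rw [hpolar, map_smul, map_sub, map_sub, hDsq _ (add_mem hc hi), hDsq c hc, hDsq _ hi,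
      sub_zero, sub_zero, smul_zero]
  ext y
  have hre : (ℜ y : A) = -(I • I • (ℜ y : A)) := by
    rw [smul_smul, I_mul_I, neg_one_smul, neg_neg]
  have hskew : ∀ a : selfAdjoint A, I • (a : A) ∈ skewAdjoint A := fun a =>
    a.prop.smul_mem_skewAdjoint conj_I
  rw [LinearMap.zero_apply, ← realPart_add_I_smul_imaginaryPart y, map_add, hre, map_neg,
    hI _ (hskew _), hD _ (hskew _), neg_zero, add_zero]

theorem stmt_16_general {A B : Type*}
    [NormedRing A] [StarRing A] [CStarRing A] [NormedAlgebra ℂ A]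
    [StarModule ℂ A] [CompleteSpace A]
    [NormedRing B] [StarRing B] [CStarRing B] [NormedAlgebra ℂ B]
    (T T₀ : A →ₗ[ℝ] B)
    (hTiso : ∀ x : A, ‖T x‖ = ‖x‖) (hT₀iso : ∀ x : A, ‖T₀ x‖ = ‖x‖)
    (hT₀jordan : ∀ x y : A,
      T₀ ((1 / 2 : ℝ) • (x * y + y * x)) =
        (1 / 2 : ℝ) • (T₀ x * T₀ y + T₀ y * T₀ x))
    (hT₀star : ∀ x : A, T₀ (star x) = star (T₀ x))
    (hT1 : T 1 = 1) (hT₀1 : T₀ 1 = 1)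
    (hTtriple : ∀ x y z : A,
      T ((1 / 2 : ℝ) • (x * star y * z + z * star y * x)) =
        (1 / 2 : ℝ) • (T x * star (T y) * T z + T z * star (T y) * T x))
    (hT₀triple : ∀ x y z : A,
      T₀ ((1 / 2 : ℝ) • (x * star y * z + z * star y * x)) =
        (1 / 2 : ℝ) • (T₀ x * star (T₀ y) * T₀ z + T₀ z * star (T₀ y) * T₀ x))
    (hU : ∀ u ∈ connectedComponentIn (unitary A : Set A) 1,
      ∀ x : B, T₀ u * x * T₀ u = T u * x * T u) :
    T = T₀ := by
  have hTcont := (AddMonoidHomClass.isometry_of_norm T hTiso).continuous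
  have hT₀cont := (AddMonoidHomClass.isometry_of_norm T₀ hT₀iso).continuous
  set S := connectedComponentIn (unitary A : Set A) 1
  have hS_unitary : ∀ u ∈ S, u ∈ unitary A := fun u hu => connectedComponentIn_subset _ _ hu
  have hT₀_unitary : ∀ u ∈ S, T₀ u ∈ unitary B := fun u hu =>
    map_mem_unitary_of_jordan hT₀jordan hT₀star hT₀1 hT₀triple (hS_unitary u hu)
  have hagree : Set.EqOn T T₀ S :=
    isPreconnected_connectedComponentIn.eqOn_of_mul_star_mul_eq hT₀cont.continuousOn
      hTcont.continuousOn hT₀_unitary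
      (fun u hu => by
        rw [← map_mul_star_mul_self_of_map_triple hTtriple,
          Unitary.mul_star_self_of_mem (hS_unitary u hu), one_mul])
      (fun u hu => by rw [← hU u hu, Unitary.mul_star_self_of_mem (hT₀_unitary u hu), one_mul])
      (mem_connectedComponentIn (one_mem (unitary A))) (by rw [hT1, hT₀1])
  let D : A →L[ℝ] B := ⟨T - T₀, hTcont.sub hT₀cont⟩
  have hD : ∀ c ∈ skewAdjoint A, D c = 0 ∧ D (c * c) = 0 := fun c hc =>
    D.map_eq_zero_and_map_mul_self_eq_zero_of_map_exp_smul fun t =>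
      sub_eq_zero.2 (hagree (exp_smul_mem_connectedComponentIn_unitary hc t))
  exact sub_eq_zero.1 <| (T - T₀).eq_zero_of_map_skewAdjoint (fun c hc => (hD c hc).1)
    fun c hc => (hD c hc).2

/-- Let `T, T₀ : A → B` be surjective unital real-linear isometries between unital
C*-algebras which preserve the Jordan triple product, with `T₀` a real-linear
Jordan *-isomorphism. If `U_{T₀(u)} = U_{T(u)}` on `B` for every unitary `u` in the
principal component of the unitary group of `A`, then `T = T₀`. -/
theorem stmt_16 {A B : Type*}
    [NormedRing A] [StarRing A] [CStarRing A] [NormedAlgebra ℂ A]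
    [StarModule ℂ A] [CompleteSpace A]
    [NormedRing B] [StarRing B] [CStarRing B] [NormedAlgebra ℂ B]
    [StarModule ℂ B] [CompleteSpace B]
    (T T₀ : A →ₗ[ℝ] B)
    (hTsurj : Function.Surjective T) (hT₀surj : Function.Surjective T₀)
    (hTiso : ∀ x : A, ‖T x‖ = ‖x‖) (hT₀iso : ∀ x : A, ‖T₀ x‖ = ‖x‖)
    (hT₀jordan : ∀ x y : A,
      T₀ ((1 / 2 : ℝ) • (x * y + y * x)) =
        (1 / 2 : ℝ) • (T₀ x * T₀ y + T₀ y * T₀ x))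
    (hT₀star : ∀ x : A, T₀ (star x) = star (T₀ x))
    (hT1 : T 1 = 1) (hT₀1 : T₀ 1 = 1)
    (hTtriple : ∀ x y z : A,
      T ((1 / 2 : ℝ) • (x * star y * z + z * star y * x)) =
        (1 / 2 : ℝ) • (T x * star (T y) * T z + T z * star (T y) * T x))
    (hT₀triple : ∀ x y z : A,
      T₀ ((1 / 2 : ℝ) • (x * star y * z + z * star y * x)) =
        (1 / 2 : ℝ) • (T₀ x * star (T₀ y) * T₀ z + T₀ z * star (T₀ y) * T₀ x))
    (hU : ∀ u ∈ connectedComponentIn (unitary A : Set A) 1,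
      ∀ x : B, T₀ u * x * T₀ u = T u * x * T u) :
    T = T₀ :=
  stmt_16_general T T₀ hTiso hT₀iso hT₀jordan hT₀star hT1 hT₀1 hTtriple hT₀triple hU
end
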